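/- arXiv:2404.08458 — 5 statements merged into one kernel-verified Lean document; each statement's English description precedes it below -/
import Mathlib

section
/- Let μ ∈ [0,1]^n satisfy Σ_{w : φ(w)=1} p_μ(w) > 0, and let w_E be the deterministic assignment of μ. Then the following are equivalent: (1) there exists ν ∈ [0,1]^n such that for every world w, p_ν(w) = p_μ(w)·φ(w) / Σ_{w' : φ(w')=1} p_μ(w'); (2) there is an implicant w_D of φ whose cover contains every possible world w with p_μ(w) > 0; (3) there is an implicant w_D of φ such that every possible world agreeing with w_E on its domain lies in the cover of w_D. -/
/-- A world is an assignment of Boolean values to `n` variables. -/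
abbrev World (n : ℕ) := Fin n → Bool

/-- The independent distribution with parameters `μ`:
`p_μ(w) = ∏ i, μ i ^ (w i) * (1 - μ i) ^ (1 - w i)`. -/
def pInd {n : ℕ} (μ : Fin n → ℝ) (w : World n) : ℝ :=
  ∏ i, if w i then μ i else 1 - μ i

/-- A partial assignment with domain `D` and values `a` covers the world `w`. -/
def covers {n : ℕ} (D : Set (Fin n)) (a : Fin n → Bool) (w : World n) : Prop :=
  ∀ i ∈ D, w i = a i

/-- The cover of a partial assignment: all worlds agreeing with it on its domain. -/
def coverSet {n : ℕ} (D : Set (Fin n)) (a : Fin n → Bool) : Set (World n) :=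
  {w | covers D a w}

/-- A partial assignment is an implicant of `φ` if every world in its cover is possible. -/
def Implicant {n : ℕ} (φ : World n → Bool) (D : Set (Fin n)) (a : Fin n → Bool) : Prop :=
  ∀ w : World n, covers D a w → φ w = true

/-- A prime implicant: an implicant whose cover is not strictly contained in the cover
of another implicant. -/
def PrimeImplicant {n : ℕ} (φ : World n → Bool) (D : Set (Fin n)) (a : Fin n → Bool) : Prop :=
  Implicant φ D a ∧ ∀ (E : Set (Fin n)) (b : Fin n → Bool),
    Implicant φ E b → ¬ (coverSet D a ⊂ coverSet E b)

/-- The deterministic coordinates of the parameter vector `μ`. -/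
def detDom {n : ℕ} (μ : Fin n → ℝ) : Set (Fin n) := {i | μ i = 0 ∨ μ i = 1}

/-- The value assigned by `μ` at a deterministic coordinate. -/
noncomputable def detVal {n : ℕ} (μ : Fin n → ℝ) (i : Fin n) : Bool :=
  if μ i = 1 then true else false

/-- A distribution over worlds: nonnegative, summing to one. -/
def IsDistribution {n : ℕ} (p : World n → ℝ) : Prop :=
  (∀ w, 0 ≤ p w) ∧ ∑ w, p w = 1

/-- A distribution is possible for `φ` if it vanishes on all impossible worlds. -/
def PossibleDist {n : ℕ} (φ : World n → Bool) (p : World n → ℝ) : Prop :=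
  ∀ w, φ w = false → p w = 0

/-- The unit hypercube of parameters. -/
def unitCube (n : ℕ) : Set (Fin n → ℝ) := {μ | ∀ i, μ i ∈ Set.Icc (0:ℝ) 1}

/-- The implicant cube of a partial assignment: coordinates in `D` are fixed,
the others range over `[0,1]`. -/
def implicantCube {n : ℕ} (D : Set (Fin n)) (a : Fin n → Bool) : Set (Fin n → ℝ) :=
  {μ | (∀ i, μ i ∈ Set.Icc (0:ℝ) 1) ∧ ∀ i ∈ D, μ i = if a i then 1 else 0}

/-- The cubical set of `φ`: the union of the prime implicant cubes. -/
def cubicalSet {n : ℕ} (φ : World n → Bool) : Set (Fin n → ℝ) :=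
  ⋃ (D : Set (Fin n)) (a : Fin n → Bool) (_ : PrimeImplicant φ D a), implicantCube D a

/-- The weighted model count `Σ_{w : φ(w)=1} p_μ(w)`. -/
noncomputable def WMC {n : ℕ} (φ : World n → Bool) (μ : Fin n → ℝ) : ℝ :=
  ∑ w : World n, if φ w then pInd μ w else 0

/-- A world regarded as a point of `[0,1]^n ⊆ ℝ^n`. -/
def worldPoint {n : ℕ} (w : World n) : Fin n → ℝ := fun i => if w i then 1 else 0

/-- An elementary interval is `{0}`, `{1}` or `[0,1]`. -/
def ElemInterval (I : Set ℝ) : Prop := I = {0} ∨ I = {1} ∨ I = Set.Icc 0 1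

/-- An elementary cube is a product of elementary intervals. -/
def IsElemCube {n : ℕ} (C : Set (Fin n → ℝ)) : Prop :=
  ∃ I : Fin n → Set ℝ, (∀ i, ElemInterval (I i)) ∧ C = {x | ∀ i, x i ∈ I i}

lemma pInd_nonneg {n : ℕ} {μ : Fin n → ℝ} (hμ : μ ∈ unitCube n) (w : World n) :
    0 ≤ pInd μ w := by
  apply Finset.prod_nonneg
  intro i _
  rcases hμ i with ⟨h0, h1⟩
  split <;> linarith

lemma pInd_pos_iff {n : ℕ} {μ : Fin n → ℝ} (hμ : μ ∈ unitCube n) (w : World n) :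
    0 < pInd μ w ↔ covers (detDom μ) (detVal μ) w := by
  constructor
  · intro h i hi
    by_contra hne
    have hz : (if w i then μ i else 1 - μ i) = 0 := by
      rcases hi with h0 | h1
      · have hv : detVal μ i = false := by
          simp [detVal, h0]
        rw [hv] at hne
        have : w i = true := by
          cases hw : w i
          · exact absurd hw hne
          · rfl
        simp [this, h0]
      · have hv : detVal μ i = true := by simp [detVal, h1]
        rw [hv] at hne
        have : w i = false := by
          cases hw : w i
          · rfl
          · exact absurd hw hne
        simp [this, h1]
    have : pInd μ w = 0 := Finset.prod_eq_zero (Finset.mem_univ i) hz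
    rw [this] at h
    exact lt_irrefl 0 h
  · intro h
    apply Finset.prod_pos
    intro i _
    rcases hμ i with ⟨h0, h1⟩
    by_cases hD : i ∈ detDom μ
    · have hw := h i hD
      rcases hD with hμ0 | hμ1
      · have : detVal μ i = false := by
          simp [detVal, hμ0]
        rw [this] at hw
        simp [hw, hμ0]
      · have : detVal μ i = true := by simp [detVal, hμ1]
        rw [this] at hw
        simp [hw, hμ1]
    · have hne : ¬(μ i = 0 ∨ μ i = 1) := hD
      push_neg at hne
      have h0' : 0 < μ i := lt_of_le_of_ne h0 (Ne.symm hne.1)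
      have h1' : μ i < 1 := lt_of_le_of_ne h1 hne.2
      split <;> linarith

lemma sum_pInd {n : ℕ} (ν : Fin n → ℝ) : ∑ w : World n, pInd ν w = 1 := by
  classical
  have h := Fintype.prod_sum (fun (i : Fin n) (b : Bool) => if b then ν i else 1 - ν i)
  simp only [pInd]
  rw [← h]
  simp

/-- Representability of the conditioned independent distribution. -/
theorem stmt1 (n : ℕ) (hn : 1 ≤ n) (φ : World n → Bool) (hφ : ∃ w, φ w = true)
    (μ : Fin n → ℝ) (hμ : μ ∈ unitCube n) (hpos : 0 < WMC φ μ) :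
    List.TFAE [
      -- (1) the conditional distribution is representable by an independent distribution
      (∃ ν : Fin n → ℝ, ν ∈ unitCube n ∧
        ∀ w : World n, pInd ν w = pInd μ w * (if φ w then 1 else 0) / WMC φ μ),
      -- (2) some implicant covers every possible world in the support of `p_μ`
      (∃ (D : Set (Fin n)) (a : Fin n → Bool), Implicant φ D a ∧
        ∀ w : World n, φ w = true → 0 < pInd μ w → covers D a w),
      -- (3) some implicant covers every possible world agreeing with the deterministic
      --     assignment of `μ` on its domain
      (∃ (D : Set (Fin n)) (a : Fin n → Bool), Implicant φ D a ∧
        ∀ w : World n, φ w = true → covers (detDom μ) (detVal μ) w → covers D a w)] := by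
  classical
  have hnn := pInd_nonneg hμ
  tfae_have 2 ↔ 3 := by
    constructor
    · rintro ⟨D, a, hImp, hSup⟩
      exact ⟨D, a, hImp, fun w hw hc => hSup w hw ((pInd_pos_iff hμ w).2 hc)⟩
    · rintro ⟨D, a, hImp, hSup⟩
      exact ⟨D, a, hImp, fun w hw hp => hSup w hw ((pInd_pos_iff hμ w).1 hp)⟩
  tfae_have 1 → 2 := by
    rintro ⟨ν, hνc, hν⟩
    refine ⟨detDom ν, detVal ν, ?_, ?_⟩
    · intro w hc
      have hp : 0 < pInd ν w := (pInd_pos_iff hνc w).2 hc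
      rw [hν w] at hp
      by_contra hfalse
      have : φ w = false := by
        cases h : φ w
        · rfl
        · exact absurd h hfalse
      rw [this] at hp
      simp at hp
    · intro w hw hp
      apply (pInd_pos_iff hνc w).1
      rw [hν w, hw]
      simp only [if_true]
      rw [mul_one]
      exact div_pos hp hpos
  tfae_have 2 → 1 := by
    rintro ⟨D, a, hImp, hSup⟩
    set ν : Fin n → ℝ := fun i => if i ∈ D then (if a i then 1 else 0) else μ i with hνdef
    have hνc : ν ∈ unitCube n := by
      intro i
      by_cases h : i ∈ D
      · simp only [hνdef, h, if_true]
        split <;> constructor <;> norm_num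
      · simp only [hνdef, h, if_false]
        exact hμ i
    set c : ℝ := ∏ i, if i ∈ D then (if a i then μ i else 1 - μ i) else 1 with hcdef
    have keyA : ∀ w : World n,
        (if covers D a w then pInd μ w else 0) = pInd ν w * c := by
      intro w
      by_cases hc : covers D a w
      · rw [if_pos hc]
        unfold pInd
        rw [hcdef, ← Finset.prod_mul_distrib]
        apply Finset.prod_congr rfl
        intro i _
        by_cases hD : i ∈ D
        · have hwa := hc i hD
          simp only [hνdef, hD, if_true, hwa]
          cases h : a i <;> simp [h]
        · simp [hνdef, hD]
      · rw [if_neg hc]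
        unfold covers at hc
        push_neg at hc
        obtain ⟨i, hiD, hne⟩ := hc
        have hz : (if w i then ν i else 1 - ν i) = 0 := by
          simp only [hνdef, hiD, if_true]
          cases hw : w i <;> cases ha : a i <;> simp_all
        have h0 : pInd ν w = 0 := Finset.prod_eq_zero (Finset.mem_univ i) hz
        rw [h0, zero_mul]
    have hφcov : ∀ w : World n,
        (if φ w then pInd μ w else 0) = (if covers D a w then pInd μ w else 0) := by
      intro w
      by_cases hc : covers D a w
      · rw [if_pos hc, if_pos (hImp w hc)]
      · rw [if_neg hc]
        by_cases hw : φ w = true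
        · rw [if_pos hw]
          have : ¬ 0 < pInd μ w := fun hp => hc (hSup w hw hp)
          linarith [hnn w, not_lt.1 this]
        · rw [if_neg hw]
    have hWMC : WMC φ μ = c := by
      unfold WMC
      calc ∑ w : World n, (if φ w then pInd μ w else 0)
          = ∑ w : World n, (if covers D a w then pInd μ w else 0) := by
            exact Finset.sum_congr rfl fun w _ => hφcov w
        _ = ∑ w : World n, pInd ν w * c := Finset.sum_congr rfl fun w _ => keyA w
        _ = (∑ w : World n, pInd ν w) * c := by rw [Finset.sum_mul]
        _ = c := by rw [sum_pInd ν, one_mul]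
    have hc0 : c ≠ 0 := by rw [← hWMC]; exact ne_of_gt hpos
    refine ⟨ν, hνc, fun w => ?_⟩
    have h1 : pInd μ w * (if φ w then 1 else 0) = (if φ w then pInd μ w else 0) := by
      split <;> ring
    rw [h1, hφcov w, keyA w, hWMC, mul_div_assoc, div_self hc0, mul_one]
  tfae_finish
end

section
/- For every μ ∈ [0,1]^n, μ lies in the cubical set C_φ (the union of the prime implicant cubes of φ) if and only if the independent distribution p_μ is possible for φ. -/
/-!
The point `μ` determines the partial assignment `(detDom μ, detVal μ)` fixing exactly its
coordinates `0` and `1`, and the support of `p_μ` is precisely the cover of that assignment.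
Hence `p_μ` is possible iff this assignment is an implicant, while `μ` lies in the cube of an
implicant iff the cover of that implicant contains the cover of `μ`'s assignment. Among the
finitely many implicants whose covers contain a given one, one with a maximal cover is prime.
-/

lemma pInd_ne_zero_iff_covers {n : ℕ} (μ : Fin n → ℝ) (w : World n) :
    pInd μ w ≠ 0 ↔ covers (detDom μ) (detVal μ) w := by
  simp only [pInd, ne_eq, Finset.prod_eq_zero_iff, Finset.mem_univ, true_and, not_exists, covers,
    detDom, detVal, Set.mem_ofPred_eq]
  refine forall_congr' fun i => ?_
  cases w i <;> grind

lemma possibleDist_pInd_iff_implicant {n : ℕ} (φ : World n → Bool) (μ : Fin n → ℝ) :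
    PossibleDist φ (pInd μ) ↔ Implicant φ (detDom μ) (detVal μ) := by
  simp only [PossibleDist, Implicant, ← pInd_ne_zero_iff_covers]
  refine forall_congr' fun w => ?_
  cases φ w <;> simp

lemma mem_detDom_and_detVal_eq_iff {n : ℕ} (μ : Fin n → ℝ) (i : Fin n) (c : Bool) :
    i ∈ detDom μ ∧ detVal μ i = c ↔ μ i = if c then 1 else 0 := by
  by_cases h1 : μ i = 1 <;> cases c <;> simp [detDom, detVal, h1]

lemma coverSet_subset_coverSet_iff {n : ℕ} {D E : Set (Fin n)} {a b : Fin n → Bool} :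
    coverSet D a ⊆ coverSet E b ↔ ∀ i ∈ E, i ∈ D ∧ a i = b i := by
  classical
  refine ⟨fun h i hi => ?_, fun h w hw i hi => (hw i (h i hi).1).trans (h i hi).2⟩
  let w : World n := fun j => if j ∈ D then a j else !b j
  have hwE : w i = b i := h (fun j hj => if_pos hj) i hi
  by_cases hiD : i ∈ D
  · exact ⟨hiD, by simpa [w, hiD] using hwE⟩
  · simp [w, hiD] at hwE

lemma mem_implicantCube_iff {n : ℕ} (D : Set (Fin n)) (a : Fin n → Bool) (μ : Fin n → ℝ) :
    μ ∈ implicantCube D a ↔ μ ∈ unitCube n ∧ coverSet (detDom μ) (detVal μ) ⊆ coverSet D a := by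
  simp only [implicantCube, coverSet_subset_coverSet_iff, mem_detDom_and_detVal_eq_iff]
  rfl

lemma Implicant.exists_primeImplicant_coverSet_subset {n : ℕ} {φ : World n → Bool}
    {D : Set (Fin n)} {a : Fin n → Bool} (h : Implicant φ D a) :
    ∃ E b, PrimeImplicant φ E b ∧ coverSet D a ⊆ coverSet E b := by
  obtain ⟨⟨E, b⟩, ⟨hEb, hsub⟩, hmax⟩ := exists_maximalFor_of_wellFoundedGT
    (fun p : Set (Fin n) × (Fin n → Bool) => Implicant φ p.1 p.2 ∧ coverSet D a ⊆ coverSet p.1 p.2)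
    (fun p => coverSet p.1 p.2) ⟨(D, a), h, subset_rfl⟩
  refine ⟨E, b, ⟨hEb, fun E' b' hE'b' hlt => hlt.not_subset ?_⟩, hsub⟩
  exact hmax (j := (E', b')) ⟨hE'b', hsub.trans hlt.subset⟩ hlt.subset

lemma Implicant.mono {n : ℕ} {φ : World n → Bool} {D E : Set (Fin n)} {a b : Fin n → Bool}
    (h : Implicant φ E b) (hsub : coverSet D a ⊆ coverSet E b) : Implicant φ D a :=
  fun w hw => h w (hsub hw)

lemma mem_cubicalSet_iff_implicant {n : ℕ} (φ : World n → Bool) {μ : Fin n → ℝ}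
    (hμ : μ ∈ unitCube n) : μ ∈ cubicalSet φ ↔ Implicant φ (detDom μ) (detVal μ) := by
  simp only [cubicalSet, Set.mem_iUnion, mem_implicantCube_iff, hμ, true_and, exists_prop]
  exact ⟨fun ⟨_, _, hprime, hsub⟩ => hprime.1.mono hsub,
    Implicant.exists_primeImplicant_coverSet_subset⟩

theorem stmt2_general (n : ℕ) (φ : World n → Bool) (μ : Fin n → ℝ) (hμ : μ ∈ unitCube n) :
    μ ∈ cubicalSet φ ↔ PossibleDist φ (pInd μ) := by
  rw [mem_cubicalSet_iff_implicant φ hμ, possibleDist_pInd_iff_implicant]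

/-- The cubical set represents the possible independent distributions. -/
theorem stmt2 (n : ℕ) (hn : 1 ≤ n) (φ : World n → Bool) (hφ : ∃ w, φ w = true)
    (μ : Fin n → ℝ) (hμ : μ ∈ unitCube n) :
    μ ∈ cubicalSet φ ↔ PossibleDist φ (pInd μ) :=
  stmt2_general n φ μ hμ
end

section
/- The cubical set C_φ cannot be written as a union of fewer elementary cubes than the number of prime implicants of φ: if S is a finite collection of elementary cubes in [0,1]^n whose union equals C_φ, then the cardinality of S is at least the number of prime implicants of φ. -/
open Classical in
/-- Center point of an implicant cube: fixed coordinates take the assigned value,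
free coordinates take `1/2`. -/
noncomputable def centerPt {n : ℕ} (D : Set (Fin n)) (a : Fin n → Bool) : Fin n → ℝ :=
  fun i => if i ∈ D then (if a i then 1 else 0) else 1/2

lemma centerPt_mem {n : ℕ} (D : Set (Fin n)) (a : Fin n → Bool) :
    centerPt D a ∈ implicantCube D a := by
  classical
  constructor
  · intro i
    unfold centerPt
    split_ifs <;> norm_num
  · intro i hi
    unfold centerPt
    rw [if_pos hi]

lemma phi_of_worldPoint_mem {n : ℕ} (φ : World n → Bool) (w : World n)
    (h : worldPoint w ∈ cubicalSet φ) : φ w = true := by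
  simp only [cubicalSet, Set.mem_iUnion] at h
  obtain ⟨D, a, hpi, _, hfix⟩ := h
  apply hpi.1 w
  intro i hi
  have := hfix i hi
  unfold worldPoint at this
  cases hw : w i <;> cases ha : a i <;> simp [hw, ha] at this ⊢ <;> norm_num at this

lemma key {n : ℕ} (φ : World n → Bool) (D : Set (Fin n)) (a : Fin n → Bool)
    (hpi : PrimeImplicant φ D a) (C : Set (Fin n → ℝ)) (hC : IsElemCube C)
    (hsub : C ⊆ cubicalSet φ) (hc : centerPt D a ∈ C) :
    coverSet D a = {w | worldPoint w ∈ C} := by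
  classical
  obtain ⟨I, hI, rfl⟩ := hC
  -- free coordinates have the full interval
  have hfree : ∀ i, i ∉ D → I i = Set.Icc 0 1 := by
    intro i hi
    have hmem : (1/2 : ℝ) ∈ I i := by
      have := hc i
      unfold centerPt at this
      rwa [if_neg hi] at this
    rcases hI i with h | h | h
    · rw [h] at hmem; norm_num at hmem
    · rw [h] at hmem; norm_num at hmem
    · exact h
  set E : Set (Fin n) := {i | I i = {0} ∨ I i = {1}} with hE
  set b : Fin n → Bool := fun i => if I i = ({1} : Set ℝ) then true else false with hb
  have h01 : ({0} : Set ℝ) ≠ {1} := by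
    intro h
    have : (0:ℝ) ∈ ({1} : Set ℝ) := h ▸ rfl
    norm_num at this
  -- characterization of membership via (E, b)
  have hchar : ∀ w : World n, worldPoint w ∈ {x | ∀ i, x i ∈ I i} ↔ covers E b w := by
    intro w
    constructor
    · intro hw i hi
      have hwi := hw i
      unfold worldPoint at hwi
      rcases hi with h0 | h1
      · rw [h0] at hwi
        cases hwi' : w i
        · simp [hb, h0, h01]
        · rw [hwi'] at hwi; simp at hwi
      · rw [h1] at hwi
        cases hwi' : w i
        · rw [hwi'] at hwi; simp at hwi
        · simp [hb, h1]
    · intro hw i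
      unfold worldPoint
      by_cases hiE : i ∈ E
      · have hbi := hw i hiE
        rcases hiE with h0 | h1
        · have : b i = false := by simp [hb, h0, h01]
          rw [this] at hbi
          rw [hbi, h0]; norm_num
        · have : b i = true := by simp [hb, h1]
          rw [this] at hbi
          rw [hbi, h1]; norm_num
      · have : I i = Set.Icc 0 1 := by
          rcases hI i with h | h | h
          · exact absurd (Or.inl h) hiE
          · exact absurd (Or.inr h) hiE
          · exact h
        rw [this]
        split_ifs <;> norm_num
  -- coverSet D a ⊆ the cube's worlds
  have hsub1 : coverSet D a ⊆ {w | worldPoint w ∈ {x | ∀ i, x i ∈ I i}} := by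
    intro w hw i
    unfold worldPoint
    by_cases hiD : i ∈ D
    · have hwi : w i = a i := hw i hiD
      have hci := hc i
      unfold centerPt at hci
      rw [if_pos hiD] at hci
      rw [hwi]
      exact hci
    · rw [hfree i hiD]
      split_ifs <;> norm_num
  -- (E, b) is an implicant
  have himp : Implicant φ E b := by
    intro w hw
    apply phi_of_worldPoint_mem φ w
    apply hsub
    exact (hchar w).mpr hw
  -- coverSet D a ⊆ coverSet E b
  have hsub2 : coverSet D a ⊆ coverSet E b := by
    intro w hw
    exact (hchar w).mp (hsub1 hw)
  have heq : coverSet D a = coverSet E b := by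
    by_contra hne
    exact hpi.2 E b himp (Set.ssubset_iff_subset_ne.mpr ⟨hsub2, hne⟩)
  ext w
  rw [Set.mem_setOf_eq, hchar w, heq]
  rfl

/-- Minimality of the prime-implicant representation:
any finite family of elementary cubes whose union is `C_φ` has at least as many cubes
as there are prime implicants of `φ`. -/
theorem stmt3 (n : ℕ) (hn : 1 ≤ n) (φ : World n → Bool) (hφ : ∃ w, φ w = true)
    (S : Finset (Set (Fin n → ℝ))) (hS : ∀ C ∈ S, IsElemCube C)
    (hunion : ⋃ C ∈ S, C = cubicalSet φ) :
    {T : Set (World n) | ∃ (D : Set (Fin n)) (a : Fin n → Bool),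
      PrimeImplicant φ D a ∧ T = coverSet D a}.ncard ≤ S.card := by
  classical
  set A : Set (Set (World n)) := {T : Set (World n) | ∃ (D : Set (Fin n)) (a : Fin n → Bool),
      PrimeImplicant φ D a ∧ T = coverSet D a} with hA
  have hSsub : ∀ C ∈ S, C ⊆ cubicalSet φ := by
    intro C hC x hx
    rw [← hunion]
    exact Set.mem_biUnion hC hx
  -- for each T in A, there is a cube whose world-set equals T
  have hex : ∀ T ∈ A, ∃ C ∈ S, {w : World n | worldPoint w ∈ C} = T := by
    intro T hT
    obtain ⟨D, a, hpi, rfl⟩ := hT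
    have hcent : centerPt D a ∈ cubicalSet φ := by
      simp only [cubicalSet, Set.mem_iUnion]
      exact ⟨D, a, hpi, centerPt_mem D a⟩
    rw [← hunion] at hcent
    obtain ⟨C, hCS, hcC⟩ := Set.mem_iUnion₂.mp hcent
    exact ⟨C, hCS, (key φ D a hpi C (hS C hCS) (hSsub C hCS) hcC).symm⟩
  set f : Set (World n) → Set (Fin n → ℝ) := fun T =>
    if h : ∃ C ∈ S, {w : World n | worldPoint w ∈ C} = T then h.choose else ∅ with hf
  have hfmem : ∀ T ∈ A, f T ∈ S ∧ {w : World n | worldPoint w ∈ f T} = T := by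
    intro T hT
    have h := hex T hT
    simp only [hf, dif_pos h]
    exact h.choose_spec
  calc A.ncard ≤ (↑S : Set (Set (Fin n → ℝ))).ncard := by
        apply Set.ncard_le_ncard_of_injOn f
        · intro T hT
          exact (hfmem T hT).1
        · intro T1 h1 T2 h2 hfeq
          have h1' := (hfmem T1 h1).2
          rw [hfeq] at h1'
          rw [← h1', (hfmem T2 h2).2]
    _ = S.card := Set.ncard_coe_finset S
end

section
/- Let p be a mixture of k independent distributions with mixture weights α and components μ_1,…,μ_k ∈ [0,1]^n. Then p is possible for φ if and only if for every m with α_m > 0, the deterministic assignment of μ_m is an implicant of φ. -/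
/-- a mixture of independent distributions is possible for `φ` iff every
component with positive weight has a deterministic assignment that is an implicant of `φ`. -/
theorem stmt14 (n : ℕ) (hn : 1 ≤ n) (φ : World n → Bool) (hφ : ∃ w, φ w = true)
    (k : ℕ) (α : Fin k → ℝ) (μ : Fin k → Fin n → ℝ)
    (hα : ∀ m, 0 ≤ α m) (hsum : ∑ m, α m = 1) (hμ : ∀ m, μ m ∈ unitCube n) :
    PossibleDist φ (fun w => ∑ m, α m * pInd (μ m) w) ↔
      ∀ m, 0 < α m → Implicant φ (detDom (μ m)) (detVal (μ m)) := by
  constructor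
  · intro hp m hm w hcov
    by_contra hfalse
    have hf : φ w = false := by
      cases h : φ w
      · rfl
      · exact absurd h hfalse
    have hzero := hp w hf
    have hterm : ∀ i ∈ Finset.univ, 0 ≤ α i * pInd (μ i) w := fun i _ =>
      mul_nonneg (hα i) (pInd_nonneg (hμ i) w)
    have := (Finset.sum_eq_zero_iff_of_nonneg hterm).mp hzero m (Finset.mem_univ m)
    have hpos : 0 < pInd (μ m) w := (pInd_pos_iff (hμ m) w).mpr hcov
    nlinarith
  · intro h w hf
    apply Finset.sum_eq_zero
    intro m _
    rcases lt_or_eq_of_le (hα m) with hm | hm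
    · have : ¬ covers (detDom (μ m)) (detVal (μ m)) w := by
        intro hcov
        have := h m hm w hcov
        rw [hf] at this
        exact Bool.false_ne_true this
      have : ¬ (0 < pInd (μ m) w) := fun hp => this ((pInd_pos_iff (hμ m) w).mp hp)
      have h0 : pInd (μ m) w = 0 := le_antisymm (not_lt.mp this) (pInd_nonneg (hμ m) w)
      rw [h0, mul_zero]
    · rw [← hm, zero_mul]
end

section
/- If φ has at least two distinct prime implicants, then the cubical set C_φ is not convex: there exist μ_1, μ_2 ∈ C_φ and λ ∈ (0,1) such that λμ_1 + (1−λ)μ_2 ∉ C_φ; equivalently, there exist μ_1, μ_2 with p_{μ_1} and p_{μ_2} possible for φ but p_{λμ_1+(1−λ)μ_2} not possible for φ. -/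
/-- `pInd` is positive when every factor is positive. -/
lemma pInd_pos {n : ℕ} (μ : Fin n → ℝ) (w : World n)
    (h : ∀ i, 0 < if w i then μ i else 1 - μ i) : 0 < pInd μ w :=
  Finset.prod_pos (fun i _ => h i)

/-- `pInd` vanishes when some factor vanishes. -/
lemma pInd_eq_zero {n : ℕ} (μ : Fin n → ℝ) (w : World n) (i : Fin n)
    (h : (if w i then μ i else 1 - μ i) = 0) : pInd μ w = 0 :=
  Finset.prod_eq_zero (Finset.mem_univ i) h

open Classical in
/-- The center of an implicant cube. -/
noncomputable def center {n : ℕ} (D : Set (Fin n)) (a : Fin n → Bool) : Fin n → ℝ :=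
  fun i => if i ∈ D then (if a i then 1 else 0) else 1/2

lemma center_mem {n : ℕ} (D : Set (Fin n)) (a : Fin n → Bool) :
    center D a ∈ implicantCube D a := by
  constructor
  · intro i
    unfold center
    split_ifs <;> norm_num
  · intro i hi
    simp [center, hi]

lemma center_mem_Icc {n : ℕ} (D : Set (Fin n)) (a : Fin n → Bool) (i : Fin n) :
    center D a i ∈ Set.Icc (0:ℝ) 1 := (center_mem D a).1 i

lemma pInd_center_possible {n : ℕ} (φ : World n → Bool) (D : Set (Fin n)) (a : Fin n → Bool)
    (himp : Implicant φ D a) : PossibleDist φ (pInd (center D a)) := by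
  intro w hw
  have hnc : ¬ covers D a w := fun hc => by simp [himp w hc] at hw
  rw [covers] at hnc
  push_neg at hnc
  obtain ⟨i, hi, hne⟩ := hnc
  refine pInd_eq_zero _ w i ?_
  unfold center
  cases hwi : w i <;> cases hai : a i <;> simp_all

/-- if `φ` has at least two distinct prime implicants, then the cubical
set `C_φ` is not convex. -/
theorem stmt19 (n : ℕ) (hn : 1 ≤ n) (φ : World n → Bool) (hφ : ∃ w, φ w = true)
    (htwo : ∃ (D₁ : Set (Fin n)) (a₁ : Fin n → Bool) (D₂ : Set (Fin n)) (a₂ : Fin n → Bool),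
      PrimeImplicant φ D₁ a₁ ∧ PrimeImplicant φ D₂ a₂ ∧ coverSet D₁ a₁ ≠ coverSet D₂ a₂) :
    ∃ (μ₁ μ₂ : Fin n → ℝ) (l : ℝ),
      μ₁ ∈ cubicalSet φ ∧ μ₂ ∈ cubicalSet φ ∧ 0 < l ∧ l < 1 ∧
      (l • μ₁ + (1 - l) • μ₂) ∉ cubicalSet φ ∧
      PossibleDist φ (pInd μ₁) ∧ PossibleDist φ (pInd μ₂) ∧
      ¬ PossibleDist φ (pInd (l • μ₁ + (1 - l) • μ₂)) := by
  classical
  obtain ⟨D₁, a₁, D₂, a₂, hp₁, hp₂, hne⟩ := htwo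
  set μ₁ : Fin n → ℝ := center D₁ a₁ with hμ₁def
  set μ₂ : Fin n → ℝ := center D₂ a₂ with hμ₂def
  set D : Set (Fin n) := {i | i ∈ D₁ ∧ i ∈ D₂ ∧ a₁ i = a₂ i} with hDdef
  set μ : Fin n → ℝ := (1/2 : ℝ) • μ₁ + (1 - 1/2 : ℝ) • μ₂ with hμdef
  -- value of μ at each coordinate
  have hμval : ∀ i, μ i = (μ₁ i + μ₂ i) / 2 := by
    intro i
    simp [hμdef, Pi.add_apply, Pi.smul_apply, smul_eq_mul]
    ring
  have hμD : ∀ i ∈ D, μ i = if a₁ i then 1 else 0 := by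
    intro i hi
    obtain ⟨h1, h2, h3⟩ := hi
    rw [hμval i]
    simp only [hμ₁def, hμ₂def, center, if_pos h1, if_pos h2, ← h3]
    cases a₁ i <;> norm_num
  have hμnD : ∀ i, i ∉ D → 0 < μ i ∧ μ i < 1 := by
    intro i hi
    rw [hμval i]
    simp only [hμ₁def, hμ₂def, center]
    by_cases h1 : i ∈ D₁ <;> by_cases h2 : i ∈ D₂ <;>
      simp only [if_pos, if_neg, h1, h2, if_true, if_false]
    · have h3 : a₁ i ≠ a₂ i := fun h => hi ⟨h1, h2, h⟩
      cases ha1 : a₁ i <;> cases ha2 : a₂ i <;> simp_all <;> norm_num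
    · cases a₁ i <;> norm_num
    · cases a₂ i <;> norm_num
    · norm_num
  -- (D, a₁) is not an implicant
  have hnotimp : ¬ Implicant φ D a₁ := by
    intro himp
    have hsub : coverSet D₁ a₁ ⊆ coverSet D a₁ := fun w hw i hi => hw i hi.1
    have heq : coverSet D₁ a₁ = coverSet D a₁ := by
      by_contra h
      exact hp₁.2 D a₁ himp ⟨hsub, fun h' => h (Set.Subset.antisymm hsub h')⟩
    have hDsub : D₁ ⊆ D := by
      intro i hi
      by_contra hiD
      set w : World n := fun j => if j = i then !(a₁ i) else a₁ j with hwdef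
      have hw : covers D a₁ w := by
        intro j hj
        have hji : j ≠ i := fun e => hiD (e ▸ hj)
        simp [hwdef, hji]
      have hw1 : w ∈ coverSet D₁ a₁ := heq ▸ hw
      have := hw1 i hi
      simp [hwdef] at this
    have hsub21 : coverSet D₂ a₂ ⊆ coverSet D₁ a₁ := by
      intro w hw i hi
      obtain ⟨_, hi2, hai⟩ := hDsub hi
      rw [hai]
      exact hw i hi2
    have hss : coverSet D₂ a₂ ⊂ coverSet D₁ a₁ :=
      ⟨hsub21, fun h' => hne (Set.Subset.antisymm h' hsub21)⟩
    exact hp₂.2 D₁ a₁ hp₁.1 hss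
  rw [Implicant] at hnotimp
  push_neg at hnotimp
  obtain ⟨w₀, hw₀cov, hw₀φ⟩ := hnotimp
  have hw₀false : φ w₀ = false := by simpa using hw₀φ
  -- pInd μ w₀ > 0
  have hpos : 0 < pInd μ w₀ := by
    refine pInd_pos μ w₀ (fun i => ?_)
    by_cases hi : i ∈ D
    · have := hμD i hi
      have hwi := hw₀cov i hi
      rw [this, hwi]
      cases a₁ i <;> norm_num
    · obtain ⟨h0, h1⟩ := hμnD i hi
      split_ifs <;> linarith
  refine ⟨μ₁, μ₂, 1/2, ?_, ?_, by norm_num, by norm_num, ?_, ?_, ?_, ?_⟩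
  · exact Set.mem_iUnion.2 ⟨D₁, Set.mem_iUnion.2 ⟨a₁, Set.mem_iUnion.2 ⟨hp₁, center_mem D₁ a₁⟩⟩⟩
  · exact Set.mem_iUnion.2 ⟨D₂, Set.mem_iUnion.2 ⟨a₂, Set.mem_iUnion.2 ⟨hp₂, center_mem D₂ a₂⟩⟩⟩
  · -- μ ∉ cubicalSet φ
    intro hmem
    rw [← hμdef] at hmem
    obtain ⟨E, hE⟩ := Set.mem_iUnion.1 hmem
    obtain ⟨b, hb⟩ := Set.mem_iUnion.1 hE
    obtain ⟨hEb, hcube⟩ := Set.mem_iUnion.1 hb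
    have hkey : ∀ i ∈ E, i ∈ D ∧ b i = a₁ i := by
      intro i hi
      have hμi := hcube.2 i hi
      by_cases hiD : i ∈ D
      · refine ⟨hiD, ?_⟩
        have h2 := hμD i hiD
        rw [h2] at hμi
        cases hb1 : b i <;> cases ha1 : a₁ i <;> rw [hb1, ha1] at hμi <;>
          simp at hμi <;> norm_num at hμi
      · exfalso
        obtain ⟨h0, h1⟩ := hμnD i hiD
        rw [hμi] at h0 h1
        cases hb1 : b i <;> rw [hb1] at h0 h1 <;> simp at h0 h1 <;> linarith
    have hcov : covers E b w₀ := by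
      intro i hi
      obtain ⟨hiD, hbi⟩ := hkey i hi
      rw [hbi]
      exact hw₀cov i hiD
    have hφt := hEb.1 w₀ hcov
    rw [hw₀false] at hφt
    exact Bool.false_ne_true hφt
  · exact pInd_center_possible φ D₁ a₁ hp₁.1
  · exact pInd_center_possible φ D₂ a₂ hp₂.1
  · intro hposs
    rw [← hμdef] at hposs
    have := hposs w₀ hw₀false
    linarith
end
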